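/- Let n ≥ 1, let Φ' ⊆ BC_n be a root subsystem in standard form, i.e. Φ' = ⋃_{B∈P} Φ_{t(B)}(B) for a partition P of {1,…,n} and types t(B) ∈ {A, D, B, C, BC} with every block of type D having at least two elements, and let Φ be any root subsystem with Φ' ⊆ Φ ⊆ BC_n. Let B_1,…,B_m enumerate the blocks of P of type A (including singleton blocks), define T : ℝ^n → ℝ^m by (Tv)_k = Σ_{i∈B_k} v_i, and set S := T(Φ ∖ Φ') ∖ {0}. Then there exist a sign function ε : {1,…,m} → {1,−1}, a partition Q of {1,…,m}, and for each block C ∈ Q a subset S_C ⊆ C, such that D_ε(S) = ⋃_{C∈Q} Ψ_C, where each Ψ_C is one of the three sets: Φ_A(C); Φ_D(C) ∪ {±2e_k : k ∈ S_C}; or Φ_D(C) ∪ {±e_k : k ∈ C} ∪ {±2e_k : k ∈ S_C}. (Here D_ε is the linear automorphism of ℝ^m with D_ε(e_k) = ε(k)·e_k.) -/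

import Mathlib

open Finset

noncomputable section

/-- Standard basis vector `e i` of `ℝ^n`. -/
def E {n : ℕ} (i : Fin n) : Fin n → ℝ := Pi.single i 1

/-- Standard inner product on `ℝ^n`. -/
def dot {n : ℕ} (v w : Fin n → ℝ) : ℝ := ∑ i, v i * w i

/-- Reflection across the hyperplane orthogonal to `α`. -/
def reflRoot {n : ℕ} (α v : Fin n → ℝ) : Fin n → ℝ := v - (2 * dot v α / dot α α) • α

/-- The root system `A_{n-1}`. -/
def Aset (n : ℕ) : Set (Fin n → ℝ) := {α | ∃ i j : Fin n, i ≠ j ∧ α = E i - E j}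

/-- The root system `D_n`. -/
def Dset (n : ℕ) : Set (Fin n → ℝ) :=
  {α | ∃ i j : Fin n, i ≠ j ∧ (α = E i - E j ∨ α = E i + E j ∨ α = -(E i + E j))}

/-- The root system `B_n`. -/
def Bset (n : ℕ) : Set (Fin n → ℝ) := Dset n ∪ {α | ∃ i : Fin n, α = E i ∨ α = -E i}

/-- The root system `C_n`. -/
def Cset (n : ℕ) : Set (Fin n → ℝ) :=
  Dset n ∪ {α | ∃ i : Fin n, α = (2:ℝ) • E i ∨ α = -((2:ℝ) • E i)}

/-- The nonreduced root system `BC_n`. -/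
def BCset (n : ℕ) : Set (Fin n → ℝ) := Bset n ∪ Cset n

/-- Types of classical irreducible root (sub)systems. -/
inductive RType | A | D | B | C | BC
deriving DecidableEq

/-- Type-`A` system on a block `B`. -/
def PhiA {n : ℕ} (B : Finset (Fin n)) : Set (Fin n → ℝ) :=
  {α | ∃ i ∈ B, ∃ j ∈ B, i ≠ j ∧ α = E i - E j}

/-- Type-`D` system on a block `B`. -/
def PhiD {n : ℕ} (B : Finset (Fin n)) : Set (Fin n → ℝ) :=
  {α | ∃ i ∈ B, ∃ j ∈ B, i ≠ j ∧ (α = E i - E j ∨ α = E i + E j ∨ α = -(E i + E j))}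

/-- Type-`B` system on a block `B`. -/
def PhiB {n : ℕ} (B : Finset (Fin n)) : Set (Fin n → ℝ) :=
  PhiD B ∪ {α | ∃ i ∈ B, α = E i ∨ α = -E i}

/-- Type-`C` system on a block `B`. -/
def PhiC {n : ℕ} (B : Finset (Fin n)) : Set (Fin n → ℝ) :=
  PhiD B ∪ {α | ∃ i ∈ B, α = (2:ℝ) • E i ∨ α = -((2:ℝ) • E i)}

/-- Type-`BC` system on a block `B`. -/
def PhiBC {n : ℕ} (B : Finset (Fin n)) : Set (Fin n → ℝ) := PhiB B ∪ PhiC B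

/-- The classical system of the given type on a block. -/
def PhiOf {n : ℕ} : RType → Finset (Fin n) → Set (Fin n → ℝ)
  | RType.A => PhiA
  | RType.D => PhiD
  | RType.B => PhiB
  | RType.C => PhiC
  | RType.BC => PhiBC

/-- The transpose of the parametrization of the kernel by the type-`A` blocks
`A 1, …, A m`: `(Tblk A v) k = ∑_{i ∈ A k} v i`. -/
def Tblk {n m : ℕ} (A : Fin m → Finset (Fin n)) (v : Fin n → ℝ) : Fin m → ℝ :=
  fun k => ∑ i ∈ A k, v i

/-- The three possible shapes of a component of a quasi-crystallograph:
type `A`; type `D` with doubled roots on a subset; type `B` with doubled roots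
on a subset (covering `B`, `C`, `BC` and the exotic types). -/
inductive QType | qA | qD | qB
deriving DecidableEq

/-- The component of shape `c` on the block `C`, with long roots on `S ⊆ C`. -/
def PsiOf {m : ℕ} : QType → Finset (Fin m) → Finset (Fin m) → Set (Fin m → ℝ)
  | QType.qA, C, _ => PhiA C
  | QType.qD, C, S => PhiD C ∪ {α | ∃ k ∈ S, α = (2:ℝ) • E k ∨ α = -((2:ℝ) • E k)}
  | QType.qB, C, S =>
      PhiD C ∪ {α | ∃ k ∈ C, α = E k ∨ α = -E k} ∪
        {α | ∃ k ∈ S, α = (2:ℝ) • E k ∨ α = -((2:ℝ) • E k)}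

/-!
Every root of `Φ'` lies in one block, and the type-`A` roots `e_i - e_j` have zero block sums, so
`T` kills `Φ'` and `S = T(Φ) ∖ {0}`. A root of `Φ` with nonzero image involves a coordinate of a
type-`A` block, so `S` consists of vectors `a e_k + b e_l` (`k ≠ l`), `a e_k` and `2a e_k` with
signs `a, b`; which of them occur is recorded by a signed graph on `{1, …, m}` with short and long
marks. Reflections in `Φ'` swap coordinates inside a block and change signs at non-`A` blocks, so
the witnesses can be moved freely; reflections in `Φ` then show that pairs compose
(`σ_{e_l + u e_p}(e_k + s e_l) = e_k - su e_p`), that a short or long root at `k` flips every pair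
at `k`, and that short roots spread along pairs. The blocks of `Q` are the connected components.
A component carrying a short root, a long root or a pair of both signs carries all pairs with both
signs; on any other component pair signs are unique and form a cocycle, which the sign change `ε`
normalises to `e_k - e_l`.
-/

def IsSign (s : ℝ) : Prop := s = 1 ∨ s = -1

namespace IsSign

variable {s u : ℝ}

lemma one : IsSign 1 := Or.inl rfl

lemma neg_one : IsSign (-1) := Or.inr rfl

lemma ne_zero (hs : IsSign s) : s ≠ 0 := by rcases hs with rfl | rfl <;> norm_num

lemma mul_self (hs : IsSign s) : s * s = 1 := by rcases hs with rfl | rfl <;> norm_num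

lemma neg (hs : IsSign s) : IsSign (-s) := by rcases hs with rfl | rfl <;> simp [IsSign]

lemma mul (hs : IsSign s) (hu : IsSign u) : IsSign (s * u) := by
  rcases hs with rfl | rfl <;> rcases hu with rfl | rfl <;> simp [IsSign]

lemma eq_neg_of_ne (hs : IsSign s) (hu : IsSign u) (h : s ≠ u) : u = -s := by
  rcases hs with rfl | rfl <;> rcases hu with rfl | rfl <;> simp_all

end IsSign

section Vectors

variable {n : ℕ}

lemma E_apply (i j : Fin n) : E i j = if j = i then 1 else 0 := Pi.single_apply i 1 j

lemma E_ne_zero (i : Fin n) : E i ≠ 0 := by simp [E]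

lemma mul_E (ε : Fin n → ℝ) (i : Fin n) : ε * E i = ε i • E i := by
  ext j; by_cases h : j = i <;> simp [E_apply, h]

lemma mul_smul_E (ε : Fin n → ℝ) (a : ℝ) (i : Fin n) : ε * (a • E i) = (ε i * a) • E i := by
  rw [mul_smul_comm, mul_E, smul_smul, mul_comm]

lemma reflRoot_smul {c : ℝ} (hc : c ≠ 0) (α v : Fin n → ℝ) :
    reflRoot (c • α) v = reflRoot α v := by
  change v - (2 * (v ⬝ᵥ c • α) / ((c • α) ⬝ᵥ (c • α))) • (c • α) =
    v - (2 * (v ⬝ᵥ α) / (α ⬝ᵥ α)) • α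
  rw [dotProduct_smul, smul_dotProduct, dotProduct_smul, smul_smul]
  congr 2
  simp only [smul_eq_mul]
  rcases eq_or_ne (α ⬝ᵥ α) 0 with h | h
  · simp [h]
  · field_simp

lemma reflRoot_self {α : Fin n → ℝ} (hα : α ≠ 0) : reflRoot α α = -α := by
  have : dot α α ≠ 0 := dotProduct_self_eq_zero.not.mpr hα
  rw [reflRoot, mul_div_assoc, div_self this]
  module

lemma reflRoot_E (i : Fin n) (v : Fin n → ℝ) : reflRoot (E i) v = v - (2 * v i) • E i := by
  simp [reflRoot, dot, E_apply]

lemma reflRoot_E_add_smul_E {i j : Fin n} (hij : i ≠ j) {u : ℝ} (hu : u * u = 1)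
    (v : Fin n → ℝ) : reflRoot (E i + u • E j) v = v - (v i + u * v j) • (E i + u • E j) := by
  simp only [reflRoot, dot, Pi.add_apply, Pi.smul_apply, smul_eq_mul, E_apply, mul_add,
    add_mul, mul_ite, ite_mul, Finset.sum_add_distrib, Finset.sum_ite_eq', Finset.mem_univ,
    if_true, if_neg hij, if_neg (Ne.symm hij), mul_one, mul_zero, zero_mul, one_mul]
  simp only [hu]
  congr 1
  match_scalars <;> ring

end Vectors

section Shapes

variable {n : ℕ} {B : Finset (Fin n)} {α : Fin n → ℝ}

def shortRoots (B : Finset (Fin n)) : Set (Fin n → ℝ) := {α | ∃ i ∈ B, α = E i ∨ α = -E i}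

def longRoots (B : Finset (Fin n)) : Set (Fin n → ℝ) :=
  {α | ∃ i ∈ B, α = (2:ℝ) • E i ∨ α = -((2:ℝ) • E i)}

lemma mem_shortRoots : α ∈ shortRoots B ↔ ∃ i ∈ B, ∃ a, IsSign a ∧ α = a • E i := by
  constructor
  · rintro ⟨i, hi, rfl | rfl⟩
    exacts [⟨i, hi, 1, .one, by simp⟩, ⟨i, hi, -1, .neg_one, by simp⟩]
  · rintro ⟨i, hi, a, rfl | rfl, rfl⟩
    exacts [⟨i, hi, .inl (by simp)⟩, ⟨i, hi, .inr (by simp)⟩]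

lemma mem_longRoots : α ∈ longRoots B ↔ ∃ i ∈ B, ∃ a, IsSign a ∧ α = a • (2:ℝ) • E i := by
  constructor
  · rintro ⟨i, hi, rfl | rfl⟩
    exacts [⟨i, hi, 1, .one, by simp⟩, ⟨i, hi, -1, .neg_one, by simp⟩]
  · rintro ⟨i, hi, a, rfl | rfl, rfl⟩
    exacts [⟨i, hi, .inl (by simp)⟩, ⟨i, hi, .inr (by simp)⟩]

lemma mem_PhiD : α ∈ PhiD B ↔
    ∃ i ∈ B, ∃ j ∈ B, i ≠ j ∧ ∃ a b, IsSign a ∧ IsSign b ∧ α = a • E i + b • E j := by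
  constructor
  · rintro ⟨i, hi, j, hj, hij, rfl | rfl | rfl⟩
    · exact ⟨i, hi, j, hj, hij, 1, -1, .one, .neg_one, by module⟩
    · exact ⟨i, hi, j, hj, hij, 1, 1, .one, .one, by module⟩
    · exact ⟨i, hi, j, hj, hij, -1, -1, .neg_one, .neg_one, by module⟩
  · rintro ⟨i, hi, j, hj, hij, a, b, rfl | rfl, rfl | rfl, rfl⟩
    · exact ⟨i, hi, j, hj, hij, .inr (.inl (by module))⟩
    · exact ⟨i, hi, j, hj, hij, .inl (by module)⟩
    · exact ⟨j, hj, i, hi, hij.symm, .inl (by module)⟩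
    · exact ⟨i, hi, j, hj, hij, .inr (.inr (by module))⟩

lemma mem_PhiA : α ∈ PhiA B ↔
    ∃ i ∈ B, ∃ j ∈ B, i ≠ j ∧ ∃ a, IsSign a ∧ α = a • E i + (-a) • E j := by
  constructor
  · rintro ⟨i, hi, j, hj, hij, rfl⟩
    exact ⟨i, hi, j, hj, hij, 1, .one, by module⟩
  · rintro ⟨i, hi, j, hj, hij, a, rfl | rfl, rfl⟩
    · exact ⟨i, hi, j, hj, hij, by module⟩
    · exact ⟨j, hj, i, hi, hij.symm, by module⟩

lemma PhiBC_eq (B : Finset (Fin n)) : PhiBC B = PhiD B ∪ shortRoots B ∪ longRoots B := by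
  simp only [PhiBC, PhiB, PhiC, shortRoots, longRoots]
  ext; simp only [Set.mem_union]; tauto

lemma mem_PhiBC : α ∈ PhiBC B ↔
    (∃ i ∈ B, ∃ j ∈ B, i ≠ j ∧ ∃ a b, IsSign a ∧ IsSign b ∧ α = a • E i + b • E j) ∨
      (∃ i ∈ B, ∃ a, IsSign a ∧ α = a • E i) ∨ ∃ i ∈ B, ∃ a, IsSign a ∧ α = a • (2:ℝ) • E i := by
  rw [PhiBC_eq, Set.mem_union, Set.mem_union, mem_PhiD, mem_shortRoots, mem_longRoots, or_assoc]

lemma BCset_eq (n : ℕ) : BCset n = PhiBC Finset.univ := by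
  simp [BCset, PhiBC, Bset, PhiB, Cset, PhiC, Dset, PhiD]

lemma PhiA_subset_PhiD (B : Finset (Fin n)) : PhiA B ⊆ PhiD B :=
  fun _ ⟨i, hi, j, hj, hij, h⟩ => ⟨i, hi, j, hj, hij, .inl h⟩

lemma PhiOf_subset_PhiBC (ty : RType) (B : Finset (Fin n)) : PhiOf ty B ⊆ PhiBC B := by
  cases ty with
  | A => exact fun α h => .inl (.inl (PhiA_subset_PhiD B h))
  | D => exact fun α h => .inl (.inl h)
  | B => exact fun α h => .inl h
  | C => exact fun α h => .inr h
  | BC => exact subset_rfl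

lemma PhiA_subset_PhiOf (ty : RType) (B : Finset (Fin n)) : PhiA B ⊆ PhiOf ty B := by
  have hAD := PhiA_subset_PhiD B
  cases ty with
  | A => exact subset_rfl
  | D => exact hAD
  | B => exact hAD.trans Set.subset_union_left
  | C => exact hAD.trans Set.subset_union_left
  | BC => exact hAD.trans (Set.subset_union_left.trans Set.subset_union_left)

lemma ne_zero_of_mem_PhiBC (h : α ∈ PhiBC B) : α ≠ 0 := by
  rcases mem_PhiBC.1 h with ⟨i, -, j, -, hij, a, b, ha, -, rfl⟩ | ⟨i, -, a, ha, rfl⟩ |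
    ⟨i, -, a, ha, rfl⟩
  · intro h0
    have := congrFun h0 i
    simp [E_apply, hij, ha.ne_zero] at this
  · exact smul_ne_zero ha.ne_zero (E_ne_zero i)
  · exact smul_ne_zero ha.ne_zero (smul_ne_zero two_ne_zero (E_ne_zero i))

end Shapes

lemma mem_PsiOf {m : ℕ} {f : QType} {C S : Finset (Fin m)} {y : Fin m → ℝ} :
    y ∈ PsiOf f C S ↔ (f = .qA ∧ y ∈ PhiA C) ∨ (f ≠ .qA ∧ (y ∈ PhiD C ∨ y ∈ longRoots S)) ∨
      (f = .qB ∧ y ∈ shortRoots C) := by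
  cases f
  · change y ∈ PhiA C ↔ _
    simp
  · change y ∈ PhiD C ∪ longRoots S ↔ _
    simp
  · change y ∈ PhiD C ∪ shortRoots C ∪ longRoots S ↔ _
    simp only [Set.mem_union]
    simp only [reduceCtorEq, ne_eq, not_false_eq_true, true_and, false_and, false_or]
    tauto

/-- The root set of a quotient, read as a graph: `pair k l s` records the roots `±(e_k + s e_l)`,
`short k` and `long k` the roots `±e_k` and `±2e_k`. The fields are the closure properties
that reflections in the ambient root system impose. -/
structure SignedGraph (m : ℕ) where
  pair : Fin m → Fin m → ℝ → Prop
  short : Fin m → Prop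
  long : Fin m → Prop
  ne_of_pair {k l : Fin m} {s : ℝ} : pair k l s → k ≠ l
  isSign_of_pair {k l : Fin m} {s : ℝ} : pair k l s → IsSign s
  pair_symm {k l : Fin m} {s : ℝ} : pair k l s → pair l k s
  pair_trans {k l p : Fin m} {s u : ℝ} : pair k l s → pair l p u → k ≠ p → pair k p (-(s * u))
  pair_neg_of_short {k l : Fin m} {s : ℝ} : short k → pair k l s → pair k l (-s)
  short_of_pair {k l : Fin m} {s : ℝ} : short k → pair k l s → short l
  pair_neg_of_long {k l : Fin m} {s : ℝ} : long k → pair k l s → pair k l (-s)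

namespace SignedGraph

variable {m : ℕ} (G : SignedGraph m) {k l p : Fin m} {s u : ℝ}

def roots : Set (Fin m → ℝ) :=
  {x | ∃ k l a b, IsSign a ∧ IsSign b ∧ G.pair k l (a * b) ∧ x = a • E k + b • E l} ∪
    {x | ∃ k a, IsSign a ∧ G.short k ∧ x = a • E k} ∪
    {x | ∃ k a, IsSign a ∧ G.long k ∧ x = a • (2:ℝ) • E k}

def Rel (k l : Fin m) : Prop := k = l ∨ ∃ s, G.pair k l s

section Rel

variable {G}

lemma Rel.symm (h : G.Rel k l) : G.Rel l k := by
  rcases h with rfl | ⟨s, hs⟩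
  exacts [.inl rfl, .inr ⟨s, G.pair_symm hs⟩]

lemma Rel.trans (h₁ : G.Rel k l) (h₂ : G.Rel l p) : G.Rel k p := by
  rcases h₁ with rfl | ⟨s, hs⟩
  · exact h₂
  rcases h₂ with rfl | ⟨u, hu⟩
  · exact .inr ⟨s, hs⟩
  by_cases hkp : k = p
  · exact .inl hkp
  · exact .inr ⟨_, G.pair_trans hs hu hkp⟩

end Rel

lemma exists_pair_of_rel (h : G.Rel k l) (hkl : k ≠ l) : ∃ s, G.pair k l s :=
  h.resolve_left hkl

def setoid : Setoid (Fin m) := ⟨G.Rel, ⟨fun _ => .inl rfl, Rel.symm, Rel.trans⟩⟩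

open Classical in
def comp (k : Fin m) : Finset (Fin m) := Finset.univ.filter (G.Rel k)

lemma mem_comp : l ∈ G.comp k ↔ G.Rel k l := by simp [comp]

lemma mem_comp_self (k : Fin m) : k ∈ G.comp k := G.mem_comp.2 (.inl rfl)

lemma comp_eq (h : l ∈ G.comp k) : G.comp l = G.comp k := by
  ext p
  simp only [mem_comp]
  exact ⟨(G.mem_comp.1 h).trans, (G.mem_comp.1 h).symm.trans⟩

lemma rel_of_mem_comp (hk : k ∈ G.comp p) (hl : l ∈ G.comp p) : G.Rel k l :=
  (G.mem_comp.1 hk).symm.trans (G.mem_comp.1 hl)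

def base (k : Fin m) : Fin m := (Quotient.mk G.setoid k).out

lemma rel_base (k : Fin m) : G.Rel (G.base k) k := Quotient.mk_out (s := G.setoid) k

lemma base_eq (h : G.Rel k l) : G.base k = G.base l :=
  congrArg Quotient.out (Quotient.sound (s := G.setoid) h)

open Classical in
/-- Measured against a base point of each component; on components where every pair has a unique
sign this makes `sign k * sign l = -s` for every pair `(k, l, s)`. -/
def sign (k : Fin m) : ℝ := if G.pair (G.base k) k 1 then -1 else 1

lemma isSign_sign (k : Fin m) : IsSign (G.sign k) := by
  unfold sign; split_ifs
  exacts [.neg_one, .one]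

def Doubled (k : Fin m) : Prop := ∃ l, G.pair k l 1 ∧ G.pair k l (-1)

lemma doubled_of_pair_of_pair_neg (h : G.pair k l s) (h' : G.pair k l (-s)) : G.Doubled k := by
  rcases G.isSign_of_pair h with rfl | rfl
  exacts [⟨l, h, h'⟩, ⟨l, by simpa using h', h⟩]

lemma eq_of_pair_of_pair (hD : ¬ G.Doubled k) (h : G.pair k l s) (h' : G.pair k l u) : s = u := by
  by_contra hsu
  rw [(G.isSign_of_pair h).eq_neg_of_ne (G.isSign_of_pair h') hsu] at h'
  exact hD (G.doubled_of_pair_of_pair_neg h h')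

lemma pair_neg_of_doubled (hD : G.Doubled k) (h : G.pair k p s) : G.pair k p (-s) := by
  obtain ⟨l, h₁, h₂⟩ := hD
  by_cases hpl : p = l
  · subst hpl
    rcases G.isSign_of_pair h with rfl | rfl
    exacts [h₂, by simpa using h₁]
  have hlp : G.pair l p s := G.pair_symm (by simpa using G.pair_trans (G.pair_symm h) h₂ hpl)
  simpa using G.pair_trans h₁ hlp (G.ne_of_pair h)

lemma doubled_of_rel (hD : G.Doubled k) (h : G.Rel k p) : G.Doubled p := by
  rcases h with rfl | ⟨s, hs⟩
  · exact hD
  exact G.doubled_of_pair_of_pair_neg (G.pair_symm hs) (G.pair_symm (G.pair_neg_of_doubled hD hs))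

lemma pair_of_doubled (hD : G.Doubled k) (h : G.Rel k l) (hkl : k ≠ l) (hs : IsSign s) :
    G.pair k l s := by
  obtain ⟨u, hu⟩ := G.exists_pair_of_rel h hkl
  by_cases hus : u = s
  · exact hus ▸ hu
  · rw [(G.isSign_of_pair hu).eq_neg_of_ne hs hus]
    exact G.pair_neg_of_doubled hD hu

lemma pair_mem_roots {a b : ℝ} (ha : IsSign a) (hb : IsSign b) (h : G.pair k l (a * b)) :
    a • E k + b • E l ∈ G.roots :=
  .inl (.inl ⟨k, l, a, b, ha, hb, h, rfl⟩)

lemma short_mem_roots {a : ℝ} (ha : IsSign a) (h : G.short k) : a • E k ∈ G.roots :=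
  .inl (.inr ⟨k, a, ha, h, rfl⟩)

lemma long_mem_roots {a : ℝ} (ha : IsSign a) (h : G.long k) : a • (2:ℝ) • E k ∈ G.roots :=
  .inr ⟨k, a, ha, h, rfl⟩

lemma zero_not_mem_roots : (0 : Fin m → ℝ) ∉ G.roots := by
  rintro ((⟨k, l, a, b, ha, -, h, h0⟩ | ⟨k, a, ha, -, h0⟩) | ⟨k, a, ha, -, h0⟩) <;>
    refine ha.ne_zero ?_
  · simpa [E_apply, G.ne_of_pair h] using (congrFun h0 k).symm
  · simpa [E_apply] using (congrFun h0 k).symm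
  · simpa [E_apply] using (congrFun h0 k).symm

open Classical in
def form (C : Finset (Fin m)) : QType :=
  if ∃ k ∈ C, G.short k then .qB else if ∃ k ∈ C, G.Doubled k ∨ G.long k then .qD else .qA

open Classical in
def longPart (C : Finset (Fin m)) : Finset (Fin m) := C.filter G.long

lemma longPart_subset (C : Finset (Fin m)) : G.longPart C ⊆ C := by
  classical
  exact Finset.filter_subset _ _

lemma mem_longPart {C : Finset (Fin m)} : k ∈ G.longPart C ↔ k ∈ C ∧ G.long k := by
  simp [longPart]

lemma form_eq_qB_iff {C : Finset (Fin m)} : G.form C = .qB ↔ ∃ k ∈ C, G.short k := by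
  unfold form; split_ifs <;> simp_all

lemma form_ne_qA_iff {C : Finset (Fin m)} :
    G.form C ≠ .qA ↔ ∃ k ∈ C, G.short k ∨ G.Doubled k ∨ G.long k := by
  unfold form
  split_ifs with h₁ h₂ <;> simp only [ne_eq, reduceCtorEq, not_false_eq_true,
    not_true_eq_false, true_iff, false_iff]
  · obtain ⟨k, hk, h⟩ := h₁; exact ⟨k, hk, .inl h⟩
  · obtain ⟨k, hk, h⟩ := h₂; exact ⟨k, hk, .inr h⟩
  · rintro ⟨k, hk, hs | hD | hl⟩
    exacts [h₁ ⟨k, hk, hs⟩, h₂ ⟨k, hk, .inl hD⟩, h₂ ⟨k, hk, .inr hl⟩]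

lemma short_of_form_eq_qB (hC : G.form (G.comp p) = .qB) (hk : k ∈ G.comp p) : G.short k := by
  obtain ⟨q, hq, hs⟩ := G.form_eq_qB_iff.1 hC
  rcases G.rel_of_mem_comp hq hk with rfl | ⟨s, h⟩
  exacts [hs, G.short_of_pair hs h]

lemma doubled_of_form_ne_qA (hC : G.form (G.comp p) ≠ .qA) (hk : k ∈ G.comp p)
    (hl : l ∈ G.comp p) (hkl : k ≠ l) : G.Doubled k := by
  obtain ⟨q, hq, hmark⟩ := G.form_ne_qA_iff.1 hC
  refine G.doubled_of_rel ?_ (G.rel_of_mem_comp hq hk)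
  obtain ⟨r, hr, hqr⟩ : ∃ r ∈ G.comp p, q ≠ r := by
    by_cases hqk : q = k
    exacts [⟨l, hl, hqk ▸ hkl⟩, ⟨k, hk, hqk⟩]
  obtain ⟨s, h⟩ := G.exists_pair_of_rel (G.rel_of_mem_comp hq hr) hqr
  rcases hmark with hs | hD | hl
  exacts [G.doubled_of_pair_of_pair_neg h (G.pair_neg_of_short hs h), hD,
    G.doubled_of_pair_of_pair_neg h (G.pair_neg_of_long hl h)]

lemma pair_of_form_ne_qA (hC : G.form (G.comp p) ≠ .qA) (hk : k ∈ G.comp p)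
    (hl : l ∈ G.comp p) (hkl : k ≠ l) (hs : IsSign s) : G.pair k l s :=
  G.pair_of_doubled (G.doubled_of_form_ne_qA hC hk hl hkl) (G.rel_of_mem_comp hk hl) hkl hs

lemma sign_base (k : Fin m) : G.sign (G.base k) = 1 := by
  rw [sign, if_neg]
  rw [G.base_eq (G.rel_base k)]
  exact fun h => G.ne_of_pair h rfl

lemma sign_eq_of_pair_base (hb : ¬ G.Doubled (G.base k)) (h : G.pair (G.base k) k s) :
    G.sign k = -s := by
  unfold sign
  split_ifs with h₁
  · rw [G.eq_of_pair_of_pair hb h h₁]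
  · rcases G.isSign_of_pair h with rfl | rfl
    exacts [absurd h h₁, by norm_num]

lemma sign_mul_sign (hC : G.form (G.comp k) = .qA) (h : G.pair k l s) :
    G.sign k * G.sign l = -s := by
  obtain ⟨b, hbk⟩ : ∃ b, G.base k = b := ⟨_, rfl⟩
  have hbl : G.base l = b := hbk ▸ (G.base_eq (.inr ⟨s, h⟩)).symm
  have hb : ¬ G.Doubled b := fun hD =>
    G.form_ne_qA_iff.2 ⟨b, G.mem_comp.2 (hbk ▸ G.rel_base k).symm, .inr (.inl hD)⟩ hC
  have hsb : G.sign b = 1 := hbk ▸ G.sign_base k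
  have key : ∀ x, G.base x = b → x = b ∨ G.pair b x (-G.sign x) := by
    intro x hx
    by_cases hxb : x = b
    · exact .inl hxb
    obtain ⟨u, hu⟩ := G.exists_pair_of_rel (hx ▸ G.rel_base x) (Ne.symm hxb)
    rw [G.sign_eq_of_pair_base (by rwa [hx]) (by rwa [hx]), neg_neg]
    exact .inr hu
  have hσk := (G.isSign_sign k).mul_self
  rcases key k hbk with rfl | hk <;> rcases key l hbl with rfl | hl
  · exact absurd rfl (G.ne_of_pair h)
  · linear_combination G.sign l * hsb + G.eq_of_pair_of_pair hb h hl
  · linear_combination G.sign k * hsb + G.eq_of_pair_of_pair hb (G.pair_symm h) hk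
  · have := G.eq_of_pair_of_pair hb (G.pair_trans hk h (G.ne_of_pair hl)) hl
    linear_combination (G.sign k) * this - s * hσk

lemma exists_sign_mul_mem_PsiOf {x : Fin m → ℝ} (hx : x ∈ G.roots) :
    ∃ k, G.sign * x ∈ PsiOf (G.form (G.comp k)) (G.comp k) (G.longPart (G.comp k)) := by
  rcases hx with (⟨k, l, a, b, ha, hb, h, rfl⟩ | ⟨k, a, ha, h, rfl⟩) | ⟨k, a, ha, h, rfl⟩
  · refine ⟨k, ?_⟩
    have hl : l ∈ G.comp k := G.mem_comp.2 (.inr ⟨_, h⟩)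
    have hσk := G.isSign_sign k
    rw [mul_add, mul_smul_E, mul_smul_E, mem_PsiOf]
    by_cases hC : G.form (G.comp k) = .qA
    · refine .inl ⟨hC, mem_PhiA.2
        ⟨k, G.mem_comp_self k, l, hl, G.ne_of_pair h, _, hσk.mul ha, ?_⟩⟩
      congr 2
      linear_combination (b * G.sign k) * G.sign_mul_sign hC h - (b * G.sign l) * hσk.mul_self -
        (G.sign k * a) * hb.mul_self
    · exact .inr (.inl ⟨hC, .inl (mem_PhiD.2 ⟨k, G.mem_comp_self k, l, hl, G.ne_of_pair h, _, _,
        hσk.mul ha, (G.isSign_sign l).mul hb, rfl⟩)⟩)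
  · refine ⟨k, ?_⟩
    rw [mul_smul_E, mem_PsiOf]
    exact .inr (.inr ⟨G.form_eq_qB_iff.2 ⟨k, G.mem_comp_self k, h⟩,
      mem_shortRoots.2 ⟨k, G.mem_comp_self k, _, (G.isSign_sign k).mul ha, rfl⟩⟩)
  · refine ⟨k, ?_⟩
    have hk : k ∈ G.longPart (G.comp k) := G.mem_longPart.2 ⟨G.mem_comp_self k, h⟩
    rw [mul_smul_comm, mul_smul_comm, mul_E, mem_PsiOf]
    refine .inr (.inl ⟨G.form_ne_qA_iff.2 ⟨k, G.mem_comp_self k, .inr (.inr h)⟩,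
      .inr (mem_longRoots.2 ⟨k, hk, _, (G.isSign_sign k).mul ha, ?_⟩)⟩)
    module

lemma sign_mul_mem_roots {k : Fin m} {y : Fin m → ℝ}
    (hy : y ∈ PsiOf (G.form (G.comp k)) (G.comp k) (G.longPart (G.comp k))) :
    G.sign * y ∈ G.roots := by
  rw [mem_PsiOf] at hy
  rcases hy with ⟨hC, hy⟩ | ⟨hC, hy | hy⟩ | ⟨hC, hy⟩
  · obtain ⟨i, hi, j, hj, hij, a, ha, rfl⟩ := mem_PhiA.1 hy
    obtain ⟨s, h⟩ := G.exists_pair_of_rel (G.rel_of_mem_comp hi hj) hij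
    rw [mul_add, mul_smul_E, mul_smul_E]
    refine G.pair_mem_roots ((G.isSign_sign i).mul ha) ((G.isSign_sign j).mul ha.neg) ?_
    convert h using 1
    linear_combination (-(a * a)) * G.sign_mul_sign (G.comp_eq hi ▸ hC) h + s * ha.mul_self
  · obtain ⟨i, hi, j, hj, hij, a, b, ha, hb, rfl⟩ := mem_PhiD.1 hy
    rw [mul_add, mul_smul_E, mul_smul_E]
    have hab := ((G.isSign_sign i).mul ha).mul ((G.isSign_sign j).mul hb)
    exact G.pair_mem_roots ((G.isSign_sign i).mul ha) ((G.isSign_sign j).mul hb)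
      (G.pair_of_form_ne_qA hC hi hj hij hab)
  · obtain ⟨i, hi, a, ha, rfl⟩ := mem_longRoots.1 hy
    rw [mul_smul_comm, mul_smul_comm, mul_E, smul_comm (2:ℝ), smul_smul]
    exact G.long_mem_roots (ha.mul (G.isSign_sign i)) (G.mem_longPart.1 hi).2
  · obtain ⟨i, hi, a, ha, rfl⟩ := mem_shortRoots.1 hy
    rw [mul_smul_E]
    exact G.short_mem_roots ((G.isSign_sign i).mul ha) (G.short_of_form_eq_qB hC hi)

theorem image_sign_mul_roots :
    (fun v : Fin m → ℝ => fun k => G.sign k * v k) '' G.roots =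
      ⋃ k, PsiOf (G.form (G.comp k)) (G.comp k) (G.longPart (G.comp k)) := by
  ext y
  simp only [Set.mem_image, Set.mem_iUnion]
  constructor
  · rintro ⟨x, hx, rfl⟩
    exact G.exists_sign_mul_mem_PsiOf hx
  · rintro ⟨k, hy⟩
    refine ⟨G.sign * y, G.sign_mul_mem_roots hy, ?_⟩
    ext p
    simp [← mul_assoc, (G.isSign_sign p).mul_self]

end SignedGraph

section Tblk

variable {n m : ℕ} (A : Fin m → Finset (Fin n))

lemma Tblk_add (v w : Fin n → ℝ) : Tblk A (v + w) = Tblk A v + Tblk A w := by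
  ext k; simp [Tblk, Finset.sum_add_distrib]

lemma Tblk_smul (c : ℝ) (v : Fin n → ℝ) : Tblk A (c • v) = c • Tblk A v := by
  ext k; simp [Tblk, Finset.mul_sum]

lemma Tblk_E (i : Fin n) : Tblk A (E i) = fun k => if i ∈ A k then 1 else 0 := by
  ext k; simp [Tblk, E_apply]

end Tblk

def ReflClosed {n : ℕ} (Φ : Set (Fin n → ℝ)) : Prop := ∀ α ∈ Φ, ∀ β ∈ Φ, reflRoot α β ∈ Φ

namespace ReflClosed

variable {n : ℕ} {Φ : Set (Fin n → ℝ)} {α v : Fin n → ℝ} {i j : Fin n} {c : ℝ}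

lemma neg_mem (hΦ : ReflClosed Φ) (hα0 : α ≠ 0) (hα : α ∈ Φ) : -α ∈ Φ :=
  reflRoot_self hα0 ▸ hΦ α hα α hα

lemma sub_two_smul_mem_of_smul_E_mem (hΦ : ReflClosed Φ) (hc : c ≠ 0) (hE : c • E i ∈ Φ)
    (hv : v ∈ Φ) : v - (2 * v i) • E i ∈ Φ := by
  simpa [reflRoot_smul hc, reflRoot_E] using hΦ _ hE _ hv

/-- The reflections in `e_i + c e_j` and `e_i - c e_j` compose to the sign change of the
coordinates `i` and `j`. -/
lemma sub_two_smul_mem_of_pair_mem (hΦ : ReflClosed Φ) (hij : i ≠ j) (hc : c * c = 1)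
    (h₁ : E i + c • E j ∈ Φ) (h₂ : E i + (-c) • E j ∈ Φ) (hv : v ∈ Φ) (hvj : v j = 0) :
    v - (2 * v i) • E i ∈ Φ := by
  have h := hΦ _ h₂ _ (hΦ _ h₁ _ hv)
  rw [reflRoot_E_add_smul_E hij hc, reflRoot_E_add_smul_E hij (by linear_combination hc)] at h
  convert h using 1
  simp only [Pi.sub_apply, Pi.add_apply, Pi.smul_apply, smul_eq_mul, E_apply, if_neg hij,
    if_neg hij.symm, if_true, hvj]
  linear_combination (norm := module) (v i) • hc • E i - (v i * c) • hc • E j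

end ReflClosed

structure NestedSubsystems (n m : ℕ) where
  blk : Fin n → Finset (Fin n)
  t : Finset (Fin n) → RType
  Phi' : Set (Fin n → ℝ)
  Phi : Set (Fin n → ℝ)
  A : Fin m → Finset (Fin n)
  mem_blk_self : ∀ i, i ∈ blk i
  blk_eq_of_mem : ∀ i j, j ∈ blk i → blk j = blk i
  two_le_card : ∀ i, t (blk i) = RType.D → 2 ≤ (blk i).card
  Phi'_eq : Phi' = ⋃ i, PhiOf (t (blk i)) (blk i)
  Phi'_subset : Phi' ⊆ Phi
  Phi_subset : Phi ⊆ BCset n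
  reflClosed : ReflClosed Phi
  exists_blk_eq : ∀ k, ∃ i, blk i = A k
  t_A : ∀ k, t (A k) = RType.A
  A_injective : Function.Injective A
  exists_A_eq : ∀ i, t (blk i) = RType.A → ∃ k, A k = blk i

namespace NestedSubsystems

variable {n m : ℕ} (N : NestedSubsystems n m) {i i' j : Fin n} {k l p : Fin m}
  {α v w : Fin n → ℝ} {c s u : ℝ}

lemma blk_eq_A (hi : i ∈ N.A k) : N.blk i = N.A k := by
  obtain ⟨i₀, h₀⟩ := N.exists_blk_eq k
  rw [← h₀] at hi ⊢
  exact N.blk_eq_of_mem i₀ i hi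

lemma mem_blk_of_mem_A (hi : i ∈ N.A k) (hi' : i' ∈ N.A k) : i' ∈ N.blk i :=
  N.blk_eq_A hi ▸ hi'

lemma ne_of_mem_A (hkl : k ≠ l) (hi : i ∈ N.A k) (hj : j ∈ N.A l) : i ≠ j := by
  rintro rfl
  exact hkl (N.A_injective ((N.blk_eq_A hi).symm.trans (N.blk_eq_A hj)))

lemma not_mem_A (hj : N.t (N.blk j) ≠ .A) : j ∉ N.A k :=
  fun h => hj (N.blk_eq_A h ▸ N.t_A k)

lemma t_ne_A (hj : ∀ k, j ∉ N.A k) : N.t (N.blk j) ≠ .A := fun h => by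
  obtain ⟨k, hk⟩ := N.exists_A_eq j h
  exact hj k (hk ▸ N.mem_blk_self j)

lemma not_mem_blk (hi : i ∈ N.A k) (hj : N.t (N.blk j) ≠ .A) : i ∉ N.blk j :=
  fun h => N.not_mem_A (N.blk_eq_of_mem j i h ▸ hj) hi

lemma Tblk_E_of_mem (hi : i ∈ N.A k) : Tblk N.A (E i) = E k := by
  ext l
  rw [Tblk_E, E_apply]
  by_cases hl : l = k
  · simp [hl, hi]
  · simp only [hl, if_false, ite_eq_right_iff, one_ne_zero]
    exact fun h => hl (N.A_injective ((N.blk_eq_A h).symm.trans (N.blk_eq_A hi)))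

lemma Tblk_E_of_t_ne_A (hj : N.t (N.blk j) ≠ .A) : Tblk N.A (E j) = 0 := by
  ext l
  simp [Tblk_E, N.not_mem_A hj]

lemma mem_of_mem_PhiOf (h : α ∈ PhiOf (N.t (N.blk i)) (N.blk i)) : α ∈ N.Phi :=
  N.Phi'_subset (N.Phi'_eq ▸ Set.mem_iUnion.2 ⟨i, h⟩)

lemma E_sub_E_mem (hj : j ∈ N.blk i) (hij : i ≠ j) : E i - E j ∈ N.Phi :=
  N.mem_of_mem_PhiOf (PhiA_subset_PhiOf _ _ ⟨i, N.mem_blk_self i, j, hj, hij, rfl⟩)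

lemma smul_mem (hc : IsSign c) (hα : α ∈ N.Phi) : c • α ∈ N.Phi := by
  rcases hc with rfl | rfl
  · simpa using hα
  · have hα0 := ne_zero_of_mem_PhiBC (BCset_eq n ▸ N.Phi_subset hα)
    simpa using N.reflClosed.neg_mem hα0 hα

/-- The reflection in `e_i - e_i'` swaps the coordinates `i` and `i'`. -/
lemma move_mem (hi' : i' ∈ N.blk i) (hw : w i = 0) (hw' : w i' = 0) (h : c • E i + w ∈ N.Phi) :
    c • E i' + w ∈ N.Phi := by
  by_cases hii' : i = i'
  · exact hii' ▸ h
  have hr := N.reflClosed _ (N.E_sub_E_mem hi' hii') _ h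
  rw [sub_eq_add_neg, ← neg_one_smul ℝ (E i'), reflRoot_E_add_smul_E hii' (by norm_num)] at hr
  convert hr using 1
  simp only [Pi.add_apply, Pi.smul_apply, smul_eq_mul, E_apply, if_neg (Ne.symm hii'), if_true,
    hw, hw']
  module

lemma sub_two_smul_mem_of_t_ne_A (hj : N.t (N.blk j) ≠ .A) (hv : v ∈ N.Phi)
    (hv0 : ∀ p ∈ N.blk j, p ≠ j → v p = 0) : v - (2 * v j) • E j ∈ N.Phi := by
  have hmem : ∀ β ∈ PhiOf (N.t (N.blk j)) (N.blk j), β ∈ N.Phi := fun β => N.mem_of_mem_PhiOf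
  have hE : E j ∈ shortRoots (N.blk j) := ⟨j, N.mem_blk_self j, .inl rfl⟩
  cases ht : N.t (N.blk j) with
  | A => exact absurd ht hj
  | D =>
    obtain ⟨j₂, hj₂, hj₂j⟩ := Finset.exists_mem_ne (N.two_le_card j ht) j
    have hmemD : ∀ β ∈ PhiD (N.blk j), β ∈ N.Phi := by rw [ht] at hmem; exact hmem
    refine N.reflClosed.sub_two_smul_mem_of_pair_mem hj₂j.symm (one_mul 1) ?_ ?_ hv
      (hv0 j₂ hj₂ hj₂j)
    · exact hmemD _ ⟨j, N.mem_blk_self j, j₂, hj₂, hj₂j.symm, .inr (.inl (by module))⟩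
    · exact hmemD _ ⟨j, N.mem_blk_self j, j₂, hj₂, hj₂j.symm, .inl (by module)⟩
  | B =>
    rw [ht] at hmem
    exact N.reflClosed.sub_two_smul_mem_of_smul_E_mem one_ne_zero
      (by simpa using hmem _ (.inr hE)) hv
  | BC =>
    rw [ht] at hmem
    exact N.reflClosed.sub_two_smul_mem_of_smul_E_mem one_ne_zero
      (by simpa using hmem _ (.inl (.inr hE))) hv
  | C =>
    rw [ht] at hmem
    exact N.reflClosed.sub_two_smul_mem_of_smul_E_mem two_ne_zero
      (hmem _ (.inr ⟨j, N.mem_blk_self j, .inl rfl⟩)) hv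

/- The roots of `Phi` that `Tblk A` maps to `e_k + s e_l`, to `e_k` and to `2 e_k`, respectively
(up to sign). -/

def Pair (k l : Fin m) (s : ℝ) : Prop :=
  k ≠ l ∧ IsSign s ∧ ∃ i ∈ N.A k, ∃ j ∈ N.A l, E i + s • E j ∈ N.Phi

def Short (k : Fin m) : Prop :=
  ∃ i ∈ N.A k, E i ∈ N.Phi ∨ ∃ j c, N.t (N.blk j) ≠ .A ∧ IsSign c ∧ E i + c • E j ∈ N.Phi

def Long (k : Fin m) : Prop :=
  ∃ i ∈ N.A k, (2:ℝ) • E i ∈ N.Phi ∨ ∃ j ∈ N.A k, i ≠ j ∧ E i + E j ∈ N.Phi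

section Graph

variable {N}

lemma Short.sub_two_smul_mem (hk : N.Short k) (hi : i ∈ N.A k) (hv : v ∈ N.Phi)
    (hv0 : ∀ j, N.t (N.blk j) ≠ .A → v j = 0) : v - (2 * v i) • E i ∈ N.Phi := by
  obtain ⟨i₀, hi₀, h | ⟨j, c, hj, hc, h⟩⟩ := hk
  · have hE : (1:ℝ) • E i ∈ N.Phi := by
      simpa using N.move_mem (c := 1) (w := 0) (N.mem_blk_of_mem_A hi₀ hi) rfl rfl (by simpa)
    exact N.reflClosed.sub_two_smul_mem_of_smul_E_mem one_ne_zero hE hv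
  have hji : ∀ i', i' ∈ N.A k → j ≠ i' := fun i' hi' h => N.not_mem_A hj (h ▸ hi')
  have h₁ : E i + c • E j ∈ N.Phi := by
    simpa using N.move_mem (c := 1) (N.mem_blk_of_mem_A hi₀ hi)
      (by simp [E_apply, (hji i₀ hi₀).symm]) (by simp [E_apply, (hji i hi).symm]) (by simpa)
  have h₂ : E i + (-c) • E j ∈ N.Phi := by
    have hflip := N.sub_two_smul_mem_of_t_ne_A hj h₁ fun p hp hpj => by
      have hpi : p ≠ i := fun h => N.not_mem_blk hi hj (h ▸ hp)
      simp [E_apply, hpi, hpj]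
    convert hflip using 1
    simp only [Pi.add_apply, Pi.smul_apply, smul_eq_mul, E_apply, if_true, if_neg (hji i hi)]
    module
  exact N.reflClosed.sub_two_smul_mem_of_pair_mem (hji i hi).symm hc.mul_self h₁ h₂ hv (hv0 j hj)

lemma Long.sub_two_smul_mem (hk : N.Long k) (hi : i ∈ N.A k) (hv : v ∈ N.Phi)
    (hv0 : ∀ j ∈ N.A k, j ≠ i → v j = 0) : v - (2 * v i) • E i ∈ N.Phi := by
  obtain ⟨i₁, hi₁, h | ⟨i₂, hi₂, h₁₂, h⟩⟩ := hk
  · have hE : (2:ℝ) • E i ∈ N.Phi := by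
      simpa using N.move_mem (w := 0) (N.mem_blk_of_mem_A hi₁ hi) rfl rfl (by simpa)
    exact N.reflClosed.sub_two_smul_mem_of_smul_E_mem two_ne_zero hE hv
  obtain ⟨i', hi', hii', h'⟩ : ∃ i' ∈ N.A k, i ≠ i' ∧ E i + E i' ∈ N.Phi := by
    by_cases h₁ : i = i₁
    · exact ⟨i₂, hi₂, h₁ ▸ h₁₂, h₁ ▸ h⟩
    by_cases h₂ : i = i₂
    · exact ⟨i₁, hi₁, h₂ ▸ h₁₂.symm, h₂ ▸ add_comm (E i₁) (E i₂) ▸ h⟩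
    refine ⟨i₂, hi₂, h₂, ?_⟩
    simpa using N.move_mem (c := 1) (w := E i₂) (N.mem_blk_of_mem_A hi₁ hi)
      (by simp [E_apply, h₁₂]) (by simp [E_apply, h₂]) (by simpa)
  have h'' : E i + (-1:ℝ) • E i' ∈ N.Phi := by
    simpa [sub_eq_add_neg] using N.E_sub_E_mem (N.mem_blk_of_mem_A hi hi') hii'
  exact N.reflClosed.sub_two_smul_mem_of_pair_mem hii' (one_mul 1) (by simpa using h') h'' hv
    (hv0 i' hi' hii'.symm)

lemma Pair.symm (h : N.Pair k l s) : N.Pair l k s := by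
  obtain ⟨hkl, hs, i, hi, j, hj, h⟩ := h
  refine ⟨hkl.symm, hs, j, hj, i, hi, ?_⟩
  convert N.smul_mem hs h using 1
  linear_combination (norm := module) -(hs.mul_self • E j)

lemma Pair.trans (h₁ : N.Pair k l s) (h₂ : N.Pair l p u) (hkp : k ≠ p) :
    N.Pair k p (-(s * u)) := by
  obtain ⟨hkl, hs, i, hi, j, hj, h⟩ := h₁
  obtain ⟨hlp, hu, j', hj', q, hq, h'⟩ := h₂
  have hjq := N.ne_of_mem_A hlp hj hq
  have h'' : E j + u • E q ∈ N.Phi := by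
    simpa using N.move_mem (c := 1) (w := u • E q) (N.mem_blk_of_mem_A hj' hj)
      (by simp [E_apply, N.ne_of_mem_A hlp hj' hq]) (by simp [E_apply, hjq]) (by simpa)
  have hr := N.reflClosed _ h'' _ h
  rw [reflRoot_E_add_smul_E hjq hu.mul_self] at hr
  refine ⟨hkp, (hs.mul hu).neg, i, hi, q, hq, ?_⟩
  convert hr using 1
  have hij := N.ne_of_mem_A hkl hi hj
  have hiq := N.ne_of_mem_A hkp hi hq
  simp [E_apply, hij.symm, hiq.symm, hjq.symm]
  module

lemma Pair.neg_of_short (hk : N.Short k) (h : N.Pair k l s) : N.Pair k l (-s) := by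
  obtain ⟨hkl, hs, i, hi, j, hj, h⟩ := h
  have hij := N.ne_of_mem_A hkl hi hj
  have hr := hk.sub_two_smul_mem hi h fun p hp => by
    have hpi : p ≠ i := fun h => N.not_mem_A hp (h ▸ hi)
    have hpj : p ≠ j := fun h => N.not_mem_A hp (h ▸ hj)
    simp [E_apply, hpi, hpj]
  refine ⟨hkl, hs.neg, i, hi, j, hj, ?_⟩
  convert N.smul_mem .neg_one hr using 1
  simp [E_apply, hij]
  module

lemma Pair.neg_of_long (hk : N.Long k) (h : N.Pair k l s) : N.Pair k l (-s) := by
  obtain ⟨hkl, hs, i, hi, j, hj, h⟩ := h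
  have hij := N.ne_of_mem_A hkl hi hj
  have hr := hk.sub_two_smul_mem hi h fun p hp hpi => by
    simp [E_apply, hpi, N.ne_of_mem_A hkl hp hj]
  refine ⟨hkl, hs.neg, i, hi, j, hj, ?_⟩
  convert N.smul_mem .neg_one hr using 1
  simp [E_apply, hij]
  module

lemma Short.of_pair (hk : N.Short k) (h : N.Pair k l s) : N.Short l := by
  obtain ⟨hkl, hs, i, hi, j, hj, h⟩ := h
  have hij := N.ne_of_mem_A hkl hi hj
  obtain ⟨i₀, hi₀, h₀ | ⟨j₀, c, hj₀, hc, h₀⟩⟩ := hk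
  · have hE : E i ∈ N.Phi := by
      simpa using N.move_mem (c := 1) (w := 0) (N.mem_blk_of_mem_A hi₀ hi) rfl rfl (by simpa)
    have hr := N.reflClosed _ h _ hE
    rw [reflRoot_E_add_smul_E hij hs.mul_self] at hr
    refine ⟨j, hj, .inl ?_⟩
    convert N.smul_mem hs.neg hr using 1
    simp [E_apply, hij.symm]
    linear_combination (norm := module) -(hs.mul_self • E j)
  · have hj₀A : ∀ i', i' ∈ N.A k → j₀ ≠ i' := fun i' hi' h => N.not_mem_A hj₀ (h ▸ hi')
    have hE : E i + c • E j₀ ∈ N.Phi := by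
      simpa using N.move_mem (c := 1) (N.mem_blk_of_mem_A hi₀ hi)
        (by simp [E_apply, (hj₀A i₀ hi₀).symm]) (by simp [E_apply, (hj₀A i hi).symm]) (by simpa)
    have hr := N.reflClosed _ h _ hE
    rw [reflRoot_E_add_smul_E hij hs.mul_self] at hr
    refine ⟨j, hj, .inr ⟨j₀, -(s * c), hj₀, (hs.mul hc).neg, ?_⟩⟩
    convert N.smul_mem hs.neg hr using 1
    have hj₀j : j₀ ≠ j := fun h => N.not_mem_A hj₀ (h ▸ hj)
    simp [E_apply, hij.symm, hj₀j.symm, (hj₀A i hi).symm]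
    linear_combination (norm := module) -(hs.mul_self • E j)

end Graph

def graph : SignedGraph m where
  pair := N.Pair
  short := N.Short
  long := N.Long
  ne_of_pair h := h.1
  isSign_of_pair h := h.2.1
  pair_symm := Pair.symm
  pair_trans := Pair.trans
  pair_neg_of_short := Pair.neg_of_short
  short_of_pair := Short.of_pair
  pair_neg_of_long := Pair.neg_of_long

lemma Tblk_eq_zero_of_mem_Phi' (h : α ∈ N.Phi') : Tblk N.A α = 0 := by
  rw [N.Phi'_eq, Set.mem_iUnion] at h
  obtain ⟨i, hα⟩ := h
  by_cases ht : N.t (N.blk i) = .A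
  · obtain ⟨k, hk⟩ := N.exists_A_eq i ht
    rw [ht] at hα
    obtain ⟨p, hp, q, hq, -, rfl⟩ := hα
    rw [← hk] at hp hq
    rw [sub_eq_add_neg, ← neg_one_smul ℝ, Tblk_add, Tblk_smul, N.Tblk_E_of_mem hp,
      N.Tblk_E_of_mem hq, neg_one_smul, add_neg_cancel]
  · have hT : ∀ p ∈ N.blk i, Tblk N.A (E p) = 0 := fun p hp =>
      N.Tblk_E_of_t_ne_A (by rwa [N.blk_eq_of_mem i p hp])
    rcases mem_PhiBC.1 (PhiOf_subset_PhiBC _ _ hα) with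
      ⟨p, hp, q, hq, -, a, b, -, -, rfl⟩ | ⟨p, hp, a, -, rfl⟩ | ⟨p, hp, a, -, rfl⟩
    · simp [Tblk_add, Tblk_smul, hT p hp, hT q hq]
    · simp [Tblk_smul, hT p hp]
    · simp [Tblk_smul, hT p hp]

lemma Tblk_mem_roots_of_pair {a b : ℝ} (hi : i ∈ N.A k) (hij : i ≠ j) (ha : IsSign a)
    (hb : IsSign b) (hα : a • E i + b • E j ∈ N.Phi) (h0 : Tblk N.A (a • E i + b • E j) ≠ 0) :
    Tblk N.A (a • E i + b • E j) ∈ N.graph.roots := by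
  have hα' : E i + (a * b) • E j ∈ N.Phi := by
    convert N.smul_mem ha hα using 1
    linear_combination (norm := module) -(ha.mul_self • E i)
  by_cases hj : ∃ l, j ∈ N.A l
  · obtain ⟨l, hl⟩ := hj
    rw [Tblk_add, Tblk_smul, Tblk_smul, N.Tblk_E_of_mem hi, N.Tblk_E_of_mem hl] at h0 ⊢
    by_cases hkl : k = l
    · subst hkl
      obtain rfl : b = a := by
        by_contra hba
        rw [ha.eq_neg_of_ne hb (Ne.symm hba)] at h0
        exact h0 (by module)
      have hlong : N.Long k := ⟨i, hi, .inr ⟨j, hl, hij, by simpa [ha.mul_self] using hα'⟩⟩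
      convert N.graph.long_mem_roots ha hlong using 1
      module
    · exact N.graph.pair_mem_roots ha hb ⟨hkl, ha.mul hb, i, hi, j, hl, hα'⟩
  · have hjA := N.t_ne_A (not_exists.1 hj)
    rw [Tblk_add, Tblk_smul, Tblk_smul, N.Tblk_E_of_mem hi, N.Tblk_E_of_t_ne_A hjA, smul_zero,
      add_zero]
    exact N.graph.short_mem_roots ha ⟨i, hi, .inr ⟨j, a * b, hjA, ha.mul hb, hα'⟩⟩

lemma Tblk_mem_roots (hα : α ∈ N.Phi) (h0 : Tblk N.A α ≠ 0) : Tblk N.A α ∈ N.graph.roots := by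
  have hT : ∀ i, (¬ ∃ k, i ∈ N.A k) → Tblk N.A (E i) = 0 := fun i hi =>
    N.Tblk_E_of_t_ne_A (N.t_ne_A (not_exists.1 hi))
  rcases mem_PhiBC.1 (BCset_eq n ▸ N.Phi_subset hα) with
    ⟨i, -, j, -, hij, a, b, ha, hb, rfl⟩ | ⟨i, -, a, ha, rfl⟩ | ⟨i, -, a, ha, rfl⟩
  · by_cases hi : ∃ k, i ∈ N.A k
    · obtain ⟨k, hk⟩ := hi
      exact N.Tblk_mem_roots_of_pair hk hij ha hb hα h0
    by_cases hj : ∃ l, j ∈ N.A l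
    · obtain ⟨l, hl⟩ := hj
      rw [add_comm] at hα h0 ⊢
      exact N.Tblk_mem_roots_of_pair hl hij.symm hb ha hα h0
    · simp [Tblk_add, Tblk_smul, hT i hi, hT j hj] at h0
  · by_cases hi : ∃ k, i ∈ N.A k
    · obtain ⟨k, hk⟩ := hi
      rw [Tblk_smul, N.Tblk_E_of_mem hk]
      refine N.graph.short_mem_roots ha ⟨i, hk, .inl ?_⟩
      simpa [smul_smul, ha.mul_self] using N.smul_mem ha hα
    · simp [Tblk_smul, hT i hi] at h0
  · by_cases hi : ∃ k, i ∈ N.A k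
    · obtain ⟨k, hk⟩ := hi
      rw [Tblk_smul, Tblk_smul, N.Tblk_E_of_mem hk]
      refine N.graph.long_mem_roots ha ⟨i, hk, .inl ?_⟩
      convert N.smul_mem ha hα using 1
      rw [smul_smul, ha.mul_self, one_smul]
    · simp [Tblk_smul, hT i hi] at h0

lemma exists_Tblk_eq_of_mem_roots {x : Fin m → ℝ} (hx : x ∈ N.graph.roots) :
    ∃ α ∈ N.Phi, Tblk N.A α = x := by
  rcases hx with (⟨k, l, a, b, ha, hb, ⟨-, -, i, hi, j, hj, h⟩, rfl⟩ |
    ⟨k, a, ha, ⟨i, hi, h | ⟨j, c, hj, -, h⟩⟩, rfl⟩) | ⟨k, a, ha, ⟨i, hi, h | ⟨j, hj, -, h⟩⟩, rfl⟩ <;>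
    refine ⟨_, N.smul_mem ha h, ?_⟩
  · rw [Tblk_smul, Tblk_add, Tblk_smul, N.Tblk_E_of_mem hi, N.Tblk_E_of_mem hj]
    linear_combination (norm := module) b • ha.mul_self • E l
  · rw [Tblk_smul, N.Tblk_E_of_mem hi]
  · rw [Tblk_smul, Tblk_add, Tblk_smul, N.Tblk_E_of_mem hi, N.Tblk_E_of_t_ne_A hj, smul_zero,
      add_zero]
  · rw [Tblk_smul, Tblk_smul, N.Tblk_E_of_mem hi]
  · rw [Tblk_smul, Tblk_add, N.Tblk_E_of_mem hi, N.Tblk_E_of_mem hj, two_smul]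

theorem image_eq_roots : Tblk N.A '' (N.Phi \ N.Phi') \ {0} = N.graph.roots := by
  apply subset_antisymm
  · rintro _ ⟨⟨α, ⟨hα, -⟩, rfl⟩, h0⟩
    exact N.Tblk_mem_roots hα h0
  · intro x hx
    have hx0 : x ≠ 0 := fun h => N.graph.zero_not_mem_roots (h ▸ hx)
    obtain ⟨α, hα, rfl⟩ := N.exists_Tblk_eq_of_mem_roots hx
    exact ⟨⟨α, ⟨hα, fun h => hx0 (N.Tblk_eq_zero_of_mem_Phi' h)⟩, rfl⟩, hx0⟩

end NestedSubsystems

theorem stmt16_general (n : ℕ)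
    (blk : Fin n → Finset (Fin n)) (hblk1 : ∀ i, i ∈ blk i)
    (hblk2 : ∀ i j, j ∈ blk i → blk j = blk i)
    (t : Finset (Fin n) → RType) (hD : ∀ i, t (blk i) = RType.D → 2 ≤ (blk i).card)
    (Φ' : Set (Fin n → ℝ)) (hΦ' : Φ' = ⋃ i, PhiOf (t (blk i)) (blk i))
    (Φ : Set (Fin n → ℝ)) (hΦ'Φ : Φ' ⊆ Φ) (hΦBC : Φ ⊆ BCset n)
    (hcl : ∀ α ∈ Φ, ∀ β ∈ Φ, reflRoot α β ∈ Φ)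
    (m : ℕ) (A : Fin m → Finset (Fin n))
    (hA1 : ∀ k, ∃ i, blk i = A k) (hA2 : ∀ k, t (A k) = RType.A)
    (hA3 : Function.Injective A)
    (hA4 : ∀ i, t (blk i) = RType.A → ∃ k, A k = blk i)
    (S : Set (Fin m → ℝ)) (hS : S = Tblk A '' (Φ \ Φ') \ {0}) :
    ∃ (ε : Fin m → ℝ) (qblk : Fin m → Finset (Fin m))
      (SC : Finset (Fin m) → Finset (Fin m)) (form : Finset (Fin m) → QType),
      (∀ k, ε k = 1 ∨ ε k = -1) ∧
      (∀ k, k ∈ qblk k) ∧ (∀ k l, l ∈ qblk k → qblk l = qblk k) ∧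
      (∀ k, SC (qblk k) ⊆ qblk k) ∧
      (fun v : Fin m → ℝ => fun k => ε k * v k) '' S =
        ⋃ k, PsiOf (form (qblk k)) (qblk k) (SC (qblk k)) := by
  let N : NestedSubsystems n m :=
    ⟨blk, t, Φ', Φ, A, hblk1, hblk2, hD, hΦ', hΦ'Φ, hΦBC, hcl, hA1, hA2, hA3, hA4⟩
  let G := N.graph
  refine ⟨G.sign, G.comp, G.longPart, G.form, G.isSign_sign, G.mem_comp_self,
    fun k l => G.comp_eq, fun k => G.longPart_subset _, ?_⟩
  rw [hS, N.image_eq_roots]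
  exact G.image_sign_mul_roots

/-- Classification of quotients of nested root subsystems of `BC_n`: up to sign
changes, a disjoint union of classical and exotic components. -/
theorem stmt16 (n : ℕ) (hn : 1 ≤ n)
    (blk : Fin n → Finset (Fin n)) (hblk1 : ∀ i, i ∈ blk i)
    (hblk2 : ∀ i j, j ∈ blk i → blk j = blk i)
    (t : Finset (Fin n) → RType) (hD : ∀ i, t (blk i) = RType.D → 2 ≤ (blk i).card)
    (Φ' : Set (Fin n → ℝ)) (hΦ' : Φ' = ⋃ i, PhiOf (t (blk i)) (blk i))
    (Φ : Set (Fin n → ℝ)) (hΦ'Φ : Φ' ⊆ Φ) (hΦBC : Φ ⊆ BCset n)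
    (hcl : ∀ α ∈ Φ, ∀ β ∈ Φ, reflRoot α β ∈ Φ)
    (m : ℕ) (A : Fin m → Finset (Fin n))
    (hA1 : ∀ k, ∃ i, blk i = A k) (hA2 : ∀ k, t (A k) = RType.A)
    (hA3 : Function.Injective A)
    (hA4 : ∀ i, t (blk i) = RType.A → ∃ k, A k = blk i)
    (S : Set (Fin m → ℝ)) (hS : S = Tblk A '' (Φ \ Φ') \ {0}) :
    ∃ (ε : Fin m → ℝ) (qblk : Fin m → Finset (Fin m))
      (SC : Finset (Fin m) → Finset (Fin m)) (form : Finset (Fin m) → QType),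
      (∀ k, ε k = 1 ∨ ε k = -1) ∧
      (∀ k, k ∈ qblk k) ∧ (∀ k l, l ∈ qblk k → qblk l = qblk k) ∧
      (∀ k, SC (qblk k) ⊆ qblk k) ∧
      (fun v : Fin m → ℝ => fun k => ε k * v k) '' S =
        ⋃ k, PsiOf (form (qblk k)) (qblk k) (SC (qblk k)) :=
  stmt16_general n blk hblk1 hblk2 t hD Φ' hΦ' Φ hΦ'Φ hΦBC hcl m A hA1 hA2 hA3 hA4 S hS
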